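/- The sequence (v_N(p))_{N≥1} of asymptotic speeds of the branching-selection particle system is non-decreasing in N; consequently there exists v_∞(p) with 0 < v_∞(p) < ∞ such that lim_{N→∞} v_N(p) = v_∞(p). -/

import Mathlib

open MeasureTheory ProbabilityTheory Filter

noncomputable section

/-- The random walk step distribution `p·δ₁ + (1−p)·δ₀` on `ℤ`. -/
def bernoulliStep (p : ℝ) : Measure ℤ :=
  ENNReal.ofReal p • Measure.dirac 1 + ENNReal.ofReal (1 - p) • Measure.dirac 0

/-- One branching-selection step: each of the `N` particles at positions `x i` branches into
two particles, displaced by `y i 0` and `y i 1` respectively; of the `2N` resulting particles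
only the `N` rightmost are kept, listed in decreasing order. -/
def nextPop (N : ℕ) (x : Fin N → ℤ) (y : Fin N → Fin 2 → ℤ) : Fin N → ℤ :=
  fun i =>
    (((Finset.univ.val.map fun q : Fin N × Fin 2 => x q.1 + y q.1 q.2).sort (· ≥ ·)).getD i 0)

variable {Ω : Type*}

/-- The branching-selection particle system with `N` particles driven by the noise family `Y`
(`Y n i ℓ` is the displacement of the `ℓ`-th offspring of the `i`-th particle at time `n`),
started from `N` particles at the origin. -/
def chain (N : ℕ) (Y : ℕ → ℕ → Fin 2 → Ω → ℤ) : ℕ → Ω → Fin N → ℤ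
  | 0 => fun _ _ => 0
  | n + 1 => fun ω => nextPop N (chain N Y n ω) fun i ℓ => Y n i.val ℓ ω

/-- Maximal position in a population. -/
def maxPop {N : ℕ} (x : Fin N → ℤ) : ℤ :=
  ((Finset.univ.val.map x).sort (· ≤ ·)).getLastD 0

/-- Minimal position in a population. -/
def minPop {N : ℕ} (x : Fin N → ℤ) : ℤ :=
  ((Finset.univ.val.map x).sort (· ≤ ·)).headD 0

/-!
Couple the systems with `N ≤ N'` particles through the same displacement variables: particle `i`
of either system uses `Y n i`. The children of the smaller population then inject into those of
the larger one with no smaller positions, so by induction on time every order statistic of the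
smaller system, in particular its maximum, is dominated, whence `v_N ≤ v_N'`. Displacements are
at most `1`, so `v_N ≤ 1`; and the particle of the one-particle system stays to the right of the
random walk `∑ Y k 0 0`, whose speed is `p` by the strong law of large numbers. The non-decreasing
sequence `v_N` is bounded by `1`, so it converges, to a limit at least `v_1 ≥ p > 0`.
-/

theorem List.Pairwise.le_getElem_iff_lt_countP {α : Type*} [LinearOrder α] {l : List α}
    (hl : l.Pairwise (· ≥ ·)) {i : ℕ} (hi : i < l.length) {m : α} :
    m ≤ l[i] ↔ i < l.countP (m ≤ ·) := by
  rw [List.pairwise_iff_getElem] at hl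
  constructor
  · intro hm
    have htake : (l.take (i + 1)).countP (m ≤ ·) = i + 1 := by
      rw [List.countP_eq_length.2, List.length_take_of_le hi]
      intro x hx
      obtain ⟨j, hj, rfl⟩ := List.mem_iff_getElem.1 hx
      simp only [List.length_take, List.getElem_take, decide_eq_true_eq] at hj ⊢
      rcases (show j ≤ i by omega).lt_or_eq with hji | rfl
      · exact hm.trans (hl j i _ _ hji)
      · exact hm
    have := (l.take_sublist (i + 1)).countP_le (p := (m ≤ ·))
    omega
  · intro hcount
    by_contra! hlt
    have hdrop : (l.drop i).countP (m ≤ ·) = 0 := by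
      refine List.countP_eq_zero.2 fun x hx => ?_
      obtain ⟨j, hj, rfl⟩ := List.mem_iff_getElem.1 hx
      simp only [List.length_drop, List.getElem_drop, decide_eq_true_eq, not_le] at hj ⊢
      rcases Nat.eq_zero_or_pos j with rfl | hj0
      · simpa using hlt
      · exact (hl i (i + j) hi (by omega) (by omega)).trans_lt hlt
    have htake := (l.take i).countP_le_length (p := (m ≤ ·))
    rw [← l.take_append_drop i, List.countP_append, hdrop] at hcount
    simp only [List.length_take] at htake
    omega

namespace Multiset

variable {α : Type*} [LinearOrder α]

theorem le_sort_ge_getElem_iff {s : Multiset α} {i : ℕ} (hi : i < (s.sort (· ≥ ·)).length)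
    {m : α} : m ≤ (s.sort (· ≥ ·))[i] ↔ i < s.countP (m ≤ ·) := by
  rw [(pairwise_sort s _).le_getElem_iff_lt_countP hi, ← coe_countP, sort_eq]

theorem sort_ge_getD_le_of_countP_le {s t : Multiset α}
    (hst : ∀ m, s.countP (m ≤ ·) ≤ t.countP (m ≤ ·)) {i : ℕ} (hi : i < card s) (d : α) :
    (s.sort (· ≥ ·)).getD i d ≤ (t.sort (· ≥ ·)).getD i d := by
  have his : i < (s.sort (· ≥ ·)).length := by rwa [length_sort]
  have hit : i < t.countP ((s.sort (· ≥ ·))[i] ≤ ·) :=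
    ((le_sort_ge_getElem_iff his).1 le_rfl).trans_le (hst _)
  have hit' : i < (t.sort (· ≥ ·)).length := by
    rw [length_sort]; exact hit.trans_le (countP_le_card _ _)
  rw [List.getD_eq_getElem _ _ his, List.getD_eq_getElem _ _ hit']
  exact (le_sort_ge_getElem_iff hit').2 hit

end Multiset

theorem Finset.countP_map_univ_le_of_le_comp {ι κ α : Type*} [Fintype ι] [Fintype κ]
    [LinearOrder α] {f : ι → α} {g : κ → α} (e : ι ↪ κ) (hfg : ∀ q, f q ≤ g (e q)) (m : α) :
    (univ.val.map f).countP (m ≤ ·) ≤ (univ.val.map g).countP (m ≤ ·) := by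
  simp only [Multiset.countP_map]
  change (univ.filter (m ≤ f ·)).card ≤ (univ.filter (m ≤ g ·)).card
  exact card_le_card_of_injOn e (fun q hq => by simpa using (mem_filter.1 hq).2.trans (hfg q))
    e.injective.injOn

section Population

variable {N : ℕ}

def offspring (x : Fin N → ℤ) (y : Fin N → Fin 2 → ℤ) : Multiset ℤ :=
  Finset.univ.val.map fun q : Fin N × Fin 2 => x q.1 + y q.1 q.2

theorem card_offspring (x : Fin N → ℤ) (y : Fin N → Fin 2 → ℤ) :
    Multiset.card (offspring x y) = N * 2 := by
  simp [offspring]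

theorem nextPop_eq_getElem (x : Fin N → ℤ) (y : Fin N → Fin 2 → ℤ) (i : Fin N) :
    ∃ hi : (i : ℕ) < ((offspring x y).sort (· ≥ ·)).length,
      nextPop N x y i = ((offspring x y).sort (· ≥ ·))[(i : ℕ)] := by
  have hi : (i : ℕ) < ((offspring x y).sort (· ≥ ·)).length := by
    rw [Multiset.length_sort, card_offspring]; omega
  exact ⟨hi, List.getD_eq_getElem _ _ hi⟩

theorem exists_nextPop_eq (x : Fin N → ℤ) (y : Fin N → Fin 2 → ℤ) (i : Fin N) :
    ∃ j ℓ, nextPop N x y i = x j + y j ℓ := by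
  obtain ⟨hi, heq⟩ := nextPop_eq_getElem x y i
  have hmem := List.getElem_mem hi
  rw [Multiset.mem_sort] at hmem
  obtain ⟨⟨j, ℓ⟩, -, hjℓ⟩ := Multiset.mem_map.1 hmem
  exact ⟨j, ℓ, heq.trans hjℓ.symm⟩

theorem add_le_nextPop_zero [NeZero N] (x : Fin N → ℤ) (y : Fin N → Fin 2 → ℤ) (j : Fin N)
    (ℓ : Fin 2) : x j + y j ℓ ≤ nextPop N x y 0 := by
  obtain ⟨hi, heq⟩ := nextPop_eq_getElem x y 0
  rw [heq, Multiset.le_sort_ge_getElem_iff hi, Fin.val_zero, Multiset.countP_pos]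
  exact ⟨_, Multiset.mem_map_of_mem _ (Finset.mem_univ_val (j, ℓ)), le_rfl⟩

theorem nextPop_le_nextPop_castLE {N' : ℕ} (h : N ≤ N') {x : Fin N → ℤ} {x' : Fin N' → ℤ}
    (hx : ∀ i, x i ≤ x' (Fin.castLE h i)) (y : ℕ → Fin 2 → ℤ) (i : Fin N) :
    nextPop N x (fun j ℓ => y j ℓ) i ≤ nextPop N' x' (fun j ℓ => y j ℓ) (Fin.castLE h i) := by
  have hcount : ∀ m, (offspring x fun j ℓ => y j ℓ).countP (m ≤ ·) ≤
      (offspring x' fun j ℓ => y j ℓ).countP (m ≤ ·) :=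
    Finset.countP_map_univ_le_of_le_comp ((Fin.castLEEmb h).prodMap (.refl _))
      fun q => add_le_add_left (hx q.1) _
  exact Multiset.sort_ge_getD_le_of_countP_le hcount (by rw [card_offspring]; omega) 0

end Population

section MaxPop

variable {N : ℕ}

theorem maxPop_eq_getLast (x : Fin N → ℤ) (hne : (Finset.univ.val.map x).sort (· ≤ ·) ≠ []) :
    maxPop x = ((Finset.univ.val.map x).sort (· ≤ ·)).getLast hne := by
  rw [maxPop, List.getLastD_eq_getLast?, List.getLast?_eq_some_getLast hne, Option.getD_some]

theorem le_maxPop (x : Fin N → ℤ) (i : Fin N) : x i ≤ maxPop x := by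
  have hmem : x i ∈ (Finset.univ.val.map x).sort (· ≤ ·) :=
    (Multiset.mem_sort _).2 (Multiset.mem_map_of_mem _ (Finset.mem_univ_val i))
  rw [maxPop_eq_getLast x (List.ne_nil_of_mem hmem)]
  exact (Multiset.pairwise_sort _ _).rel_getLast hmem

theorem exists_maxPop_eq [NeZero N] (x : Fin N → ℤ) : ∃ i, maxPop x = x i := by
  have hne : (Finset.univ.val.map x).sort (· ≤ ·) ≠ [] :=
    List.ne_nil_of_mem <|
      (Multiset.mem_sort _).2 (Multiset.mem_map_of_mem _ (Finset.mem_univ_val 0))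
  have hmem := (Multiset.mem_sort _).1 (List.getLast_mem hne)
  obtain ⟨i, -, hi⟩ := Multiset.mem_map.1 hmem
  exact ⟨i, (maxPop_eq_getLast x hne).trans hi.symm⟩

theorem maxPop_le_maxPop_of_le_castLE [NeZero N] {N' : ℕ} (h : N ≤ N') {x : Fin N → ℤ}
    {x' : Fin N' → ℤ} (hx : ∀ i, x i ≤ x' (Fin.castLE h i)) : maxPop x ≤ maxPop x' := by
  obtain ⟨i, hi⟩ := exists_maxPop_eq x
  exact hi ▸ (hx i).trans (le_maxPop x' _)

end MaxPop

section Chain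

variable (Y : ℕ → ℕ → Fin 2 → Ω → ℤ) (ω : Ω)

theorem chain_le_chain_castLE {N N' : ℕ} (h : N ≤ N') (n : ℕ) (i : Fin N) :
    chain N Y n ω i ≤ chain N' Y n ω (Fin.castLE h i) := by
  induction n generalizing i with
  | zero => exact le_rfl
  | succ n ih => exact nextPop_le_nextPop_castLE h ih (fun k ℓ => Y n k ℓ ω) i

theorem chain_le_of_le_one {N : ℕ} (hY : ∀ n k ℓ, Y n k ℓ ω ≤ 1) (n : ℕ) (i : Fin N) :
    chain N Y n ω i ≤ n := by
  induction n generalizing i with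
  | zero => exact le_rfl
  | succ n ih =>
    obtain ⟨j, ℓ, hj⟩ := exists_nextPop_eq (chain N Y n ω) (fun k ℓ => Y n k ℓ ω) i
    calc chain N Y (n + 1) ω i = chain N Y n ω j + Y n j ℓ ω := hj
      _ ≤ n + 1 := add_le_add (ih j) (hY n j ℓ)
      _ = (n + 1 : ℕ) := by push_cast; rfl

theorem sum_le_chain_one (n : ℕ) : ∑ k ∈ Finset.range n, Y k 0 0 ω ≤ chain 1 Y n ω 0 := by
  induction n with
  | zero => exact le_rfl
  | succ n ih =>
    rw [Finset.sum_range_succ]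
    exact (add_le_add_left ih _).trans (add_le_nextPop_zero _ (fun k ℓ => Y n k ℓ ω) 0 0)

end Chain

section Bernoulli

variable {p : ℝ} [MeasurableSpace Ω] {μ : Measure Ω}

theorem bernoulliStep_univ (p : ℝ) :
    bernoulliStep p Set.univ = ENNReal.ofReal p + ENNReal.ofReal (1 - p) := by
  simp [bernoulliStep]

theorem bernoulliStep_ne_zero (p : ℝ) : bernoulliStep p ≠ 0 := by
  intro h
  have := bernoulliStep_univ p
  rw [h, Measure.coe_zero, Pi.zero_apply, eq_comm, add_eq_zero, ENNReal.ofReal_eq_zero,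
    ENNReal.ofReal_eq_zero] at this
  linarith [this.1, this.2]

theorem ae_le_one_of_map_eq_bernoulliStep {X : Ω → ℤ} (hX : μ.map X = bernoulliStep p) :
    ∀ᵐ ω ∂μ, X ω ≤ 1 := by
  refine ae_of_ae_map (p := (· ≤ 1))
    (AEMeasurable.of_map_ne_zero (hX ▸ bernoulliStep_ne_zero p)) ?_
  rw [hX, bernoulliStep, ae_add_measure_iff]
  exact ⟨Measure.ae_smul_measure (by simp) _, Measure.ae_smul_measure (by simp) _⟩

theorem integrable_intCast_smul_dirac (c : ℝ) (a : ℤ) :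
    Integrable (fun x : ℤ => (x : ℝ)) (ENNReal.ofReal c • Measure.dirac a) :=
  (integrable_dirac (by simp)).smul_measure ENNReal.ofReal_ne_top

theorem integrable_bernoulliStep (p : ℝ) : Integrable (fun x : ℤ => (x : ℝ)) (bernoulliStep p) :=
  (integrable_intCast_smul_dirac _ _).add_measure (integrable_intCast_smul_dirac _ _)

theorem integral_bernoulliStep (hp : 0 ≤ p) : ∫ x : ℤ, (x : ℝ) ∂bernoulliStep p = p := by
  rw [bernoulliStep, integral_add_measure (integrable_intCast_smul_dirac _ _)
    (integrable_intCast_smul_dirac _ _), integral_smul_measure, integral_smul_measure,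
    integral_dirac, integral_dirac]
  simp [hp]

theorem ae_tendsto_average_of_map_eq_bernoulliStep (hp : 0 ≤ p) {X : ℕ → Ω → ℤ}
    (hindep : Pairwise fun i j => X i ⟂ᵢ[μ] X j) (hlaw : ∀ n, μ.map (X n) = bernoulliStep p) :
    ∀ᵐ ω ∂μ, Tendsto (fun n : ℕ => (∑ k ∈ Finset.range n, (X k ω : ℝ)) / n) atTop (nhds p) := by
  have hmeas : ∀ n, AEMeasurable (X n) μ := fun n =>
    AEMeasurable.of_map_ne_zero ((hlaw n).symm ▸ bernoulliStep_ne_zero p)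
  have hint : Integrable (fun ω => (X 0 ω : ℝ)) μ :=
    (integrable_map_measure (by fun_prop) (hmeas 0)).1 (hlaw 0 ▸ integrable_bernoulliStep p)
  have hmean : ∫ ω, (X 0 ω : ℝ) ∂μ = p := by
    rw [← integral_bernoulliStep hp, ← hlaw 0, integral_map (hmeas 0) (by fun_prop)]
  have hident : ∀ n, IdentDistrib (fun ω => (X n ω : ℝ)) (fun ω => (X 0 ω : ℝ)) μ μ := fun n =>
    (IdentDistrib.mk (hmeas n) (hmeas 0) ((hlaw n).trans (hlaw 0).symm)).comp
      (measurable_of_countable _)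
  simpa only [hmean] using strong_law_ae_real (fun n ω => (X n ω : ℝ)) hint
    (fun i j hij => (hindep hij).comp (measurable_of_countable _) (measurable_of_countable _))
    hident

end Bernoulli

section Speed

variable [MeasurableSpace Ω] {μ : Measure Ω} [NeZero μ] {Y : ℕ → ℕ → Fin 2 → Ω → ℤ}

def HasSpeed (μ : Measure Ω) (Y : ℕ → ℕ → Fin 2 → Ω → ℤ) (N : ℕ) (a : ℝ) : Prop :=
  ∀ᵐ ω ∂μ, Tendsto (fun n => (maxPop (chain N Y n ω) : ℝ) / n) atTop (nhds a)

theorem le_of_ae_tendsto_of_ae_le {f g : ℕ → Ω → ℝ} {a b : ℝ}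
    (hf : ∀ᵐ ω ∂μ, Tendsto (f · ω) atTop (nhds a)) (hg : ∀ᵐ ω ∂μ, Tendsto (g · ω) atTop (nhds b))
    (hfg : ∀ᵐ ω ∂μ, ∀ n, f n ω ≤ g n ω) : a ≤ b := by
  obtain ⟨ω, hfω, hgω, hfgω⟩ := (hf.and (hg.and hfg)).exists
  exact le_of_tendsto_of_tendsto' hfω hgω hfgω

theorem HasSpeed.le_of_le {N N' : ℕ} [NeZero N] {a b : ℝ} (ha : HasSpeed μ Y N a)
    (hb : HasSpeed μ Y N' b) (h : N ≤ N') : a ≤ b := by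
  refine le_of_ae_tendsto_of_ae_le ha hb (ae_of_all _ fun ω n => ?_)
  gcongr
  exact maxPop_le_maxPop_of_le_castLE h (chain_le_chain_castLE Y ω h n)

theorem HasSpeed.le_one {N : ℕ} [NeZero N] {a : ℝ} (hY : ∀ᵐ ω ∂μ, ∀ n k ℓ, Y n k ℓ ω ≤ 1)
    (ha : HasSpeed μ Y N a) : a ≤ 1 := by
  refine le_of_ae_tendsto_of_ae_le ha (g := fun _ _ => 1)
    (ae_of_all _ fun _ => tendsto_const_nhds) ?_
  filter_upwards [hY] with ω hω n
  obtain ⟨i, hi⟩ := exists_maxPop_eq (chain N Y n ω)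
  exact div_le_one_of_le₀ (by exact_mod_cast hi ▸ chain_le_of_le_one Y ω hω n i) n.cast_nonneg

theorem HasSpeed.ge_of_ae_tendsto_average {a c : ℝ} (ha : HasSpeed μ Y 1 a)
    (hc : ∀ᵐ ω ∂μ, Tendsto (fun n : ℕ => (∑ k ∈ Finset.range n, (Y k 0 0 ω : ℝ)) / n) atTop
      (nhds c)) : c ≤ a := by
  refine le_of_ae_tendsto_of_ae_le hc ha (ae_of_all _ fun ω n => ?_)
  gcongr
  exact_mod_cast (sum_le_chain_one Y ω n).trans (le_maxPop _ 0)

end Speed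

theorem speed_monotone_and_limit_general
    (p : ℝ) (hp0 : 0 < p)
    (Ω : Type*) [MeasureSpace Ω] [IsProbabilityMeasure (ℙ : Measure Ω)]
    (Y : ℕ → ℕ → Fin 2 → Ω → ℤ)
    (hiid : iIndepFun
      (fun q : ℕ × ℕ × Fin 2 => Y q.1 q.2.1 q.2.2) ℙ)
    (hlaw : ∀ q : ℕ × ℕ × Fin 2, Measure.map (Y q.1 q.2.1 q.2.2) ℙ = bernoulliStep p)
    (v : ℕ → ℝ)
    (hv : ∀ N, 1 ≤ N → ∀ᵐ ω ∂ℙ,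
      Tendsto (fun n => (maxPop (chain N Y n ω) : ℝ) / n) atTop (nhds (v N))) :
    (∀ N₁ N₂ : ℕ, 1 ≤ N₁ → N₁ ≤ N₂ → v N₁ ≤ v N₂) ∧
      ∃ vinf : ℝ, 0 < vinf ∧ Tendsto v atTop (nhds vinf) := by
  have hspeed : ∀ N, 1 ≤ N → HasSpeed ℙ Y N (v N) := hv
  have mono : ∀ N₁ N₂ : ℕ, 1 ≤ N₁ → N₁ ≤ N₂ → v N₁ ≤ v N₂ := fun N₁ N₂ h₁ h₁₂ =>
    have : NeZero N₁ := ⟨by omega⟩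
    (hspeed N₁ h₁).le_of_le (hspeed N₂ (h₁.trans h₁₂)) h₁₂
  have hY : ∀ᵐ ω ∂ℙ, ∀ n k ℓ, Y n k ℓ ω ≤ 1 := by
    simpa only [ae_all_iff] using fun n k ℓ => ae_le_one_of_map_eq_bernoulliStep (hlaw (n, k, ℓ))
  have hbdd : BddAbove (Set.range fun n => v (n + 1)) :=
    ⟨1, Set.forall_mem_range.2 fun n => (hspeed (n + 1) (by omega)).le_one hY⟩
  have p_le : p ≤ v 1 := (hspeed 1 le_rfl).ge_of_ae_tendsto_average
    (ae_tendsto_average_of_map_eq_bernoulliStep hp0.le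
      (fun i j hij => hiid.indepFun (i := (i, 0, 0)) (j := (j, 0, 0)) (by simpa using hij))
      fun n => hlaw (n, 0, 0))
  have hmono : Monotone fun n => v (n + 1) :=
    monotone_nat_of_le_succ fun n => mono _ _ (by omega) (by omega)
  exact ⟨mono, ⨆ n, v (n + 1), hp0.trans_le (p_le.trans (le_ciSup hbdd 0)),
    (tendsto_add_atTop_iff_nat 1).1 (tendsto_atTop_ciSup hmono hbdd)⟩

/-- **Proposition (monotonicity of the speeds and existence of the limit):** the sequence
`(v_N(p))_{N ≥ 1}` is non-decreasing in `N`; consequently there exists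
`0 < v_∞(p) < ∞` with `v_N(p) → v_∞(p)` as `N → ∞`. -/
theorem speed_monotone_and_limit
    (p : ℝ) (hp0 : 0 < p) (hp1 : p < 1)
    (Ω : Type*) [MeasureSpace Ω] [IsProbabilityMeasure (ℙ : Measure Ω)]
    (Y : ℕ → ℕ → Fin 2 → Ω → ℤ)
    (hiid : iIndepFun
      (fun q : ℕ × ℕ × Fin 2 => Y q.1 q.2.1 q.2.2) ℙ)
    (hlaw : ∀ q : ℕ × ℕ × Fin 2, Measure.map (Y q.1 q.2.1 q.2.2) ℙ = bernoulliStep p)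
    (v : ℕ → ℝ)
    (hv : ∀ N, 1 ≤ N → ∀ᵐ ω ∂ℙ,
      Tendsto (fun n => (maxPop (chain N Y n ω) : ℝ) / n) atTop (nhds (v N))) :
    (∀ N₁ N₂ : ℕ, 1 ≤ N₁ → N₁ ≤ N₂ → v N₁ ≤ v N₂) ∧
      ∃ vinf : ℝ, 0 < vinf ∧ Tendsto v atTop (nhds vinf) :=
  speed_monotone_and_limit_general p hp0 Ω Y hiid hlaw v hv

end
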